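/- arXiv:1003.0350 — 3 statements merged into one kernel-verified Lean document; each statement's English description precedes it below -/
import Mathlib

section
/- In a metabelian Lie algebra L over a field of characteristic 0, for any u, v ∈ L with u = ū + u₀ and v = v̄ + v₀ where u₀, v₀ ∈ [L,L], and for any polynomial (or formal series truncated by nilpotence) c in two commuting variables, one has [u,v]·c(ad u, ad v) = ([ū,v̄] + [u₀,v̄] − [v₀,ū])·c(ad ū, ad v̄), where c(ad u, ad v) denotes substitution of the commuting operators ad u, ad v (which commute on the commutator ideal). -/
/-!
The derived ideal `[L,L]` is abelian and stable under every `ad x`. Hence on `[L,L]` the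
operators `ad (x + x₀)` and `ad x` agree for `x₀ ∈ [L,L]`, and so do all their powers. Since
`[u₀,v₀] = 0`, the bracket `[u,v]` equals `[ū,v̄] + [u₀,v̄] − [v₀,ū]`, which lies in `[L,L]`, so
`ad u, ad v` may be replaced by `ad ū, ad v̄` in every monomial of `c`.
-/

/-- The right adjoint action `adr x : u ↦ ⁅u, x⁆`. -/
noncomputable def adr (K : Type*) (L : Type*) [Field K] [LieRing L] [LieAlgebra K L]
    (x : L) : Module.End K L := -(LieAlgebra.ad K L x)

theorem lie_eq_zero_of_mem_lie_top_top {R L : Type*} [CommRing R] [LieRing L] [LieAlgebra R L]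
    (hmet : ∀ a b c d : L, ⁅⁅a, b⁆, ⁅c, d⁆⁆ = 0) {w z : L}
    (hw : w ∈ ⁅(⊤ : LieIdeal R L), (⊤ : LieIdeal R L)⁆)
    (hz : z ∈ ⁅(⊤ : LieIdeal R L), (⊤ : LieIdeal R L)⁆) :
    ⁅w, z⁆ = 0 := by
  have mem_span {x : L} (hx : x ∈ ⁅(⊤ : LieIdeal R L), (⊤ : LieIdeal R L)⁆) :
      x ∈ Submodule.span R {⁅a, b⁆ | (a ∈ (⊤ : LieIdeal R L)) (b ∈ (⊤ : LieIdeal R L))} :=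
    LieSubmodule.lieIdeal_oper_eq_linear_span' (⊤ : LieIdeal R L) ⊤ ▸ hx
  have lie_lie_left (a b : L) : ⁅⁅a, b⁆, z⁆ = 0 :=
    LinearMap.eqOn_span (f := LieAlgebra.ad R L ⁅a, b⁆) (g := 0)
      (by rintro _ ⟨c, -, d, -, rfl⟩; exact hmet a b c d) (mem_span hz)
  have hwz : LieAlgebra.ad R L z w = 0 :=
    LinearMap.eqOn_span (g := 0)
      (by
        rintro _ ⟨a, -, b, -, rfl⟩
        rw [LieAlgebra.ad_apply, ← lie_skew, lie_lie_left, neg_zero, LinearMap.zero_apply])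
      (mem_span hw)
  rwa [LieAlgebra.ad_apply, ← lie_skew, neg_eq_zero] at hwz

section adr

variable {K L : Type*} [Field K] [LieRing L] [LieAlgebra K L]

@[simp]
theorem adr_apply (x w : L) : adr K L x w = ⁅w, x⁆ := by
  rw [adr, LinearMap.neg_apply, LieAlgebra.ad_apply, ← lie_skew, neg_neg]

theorem adr_pow_apply_mem (I : LieIdeal K L) (x : L) (n : ℕ) {w : L} (hw : w ∈ I) :
    (adr K L x ^ n) w ∈ I :=
  Module.End.pow_apply_mem_of_forall_mem (p := (I : Submodule K L)) n
    (fun w hw => by simpa using lie_mem_left K L I w x hw) w hw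

theorem adr_add_pow_apply_of_mem {I : LieIdeal K L} {x y : L} (hy : ∀ w ∈ I, ⁅w, y⁆ = 0)
    (n : ℕ) {w : L} (hw : w ∈ I) : (adr K L (x + y) ^ n) w = (adr K L x ^ n) w := by
  induction n generalizing w with
  | zero => rfl
  | succ n ih =>
    rw [pow_succ, pow_succ, Module.End.mul_apply, Module.End.mul_apply, adr_apply, adr_apply,
      lie_add, hy w hw, add_zero, ih (lie_mem_left K L I w x hw)]

end adr

theorem metabelian_bracket_series_reduction_general
    (K : Type*) (L : Type*) [Field K] [LieRing L] [LieAlgebra K L]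
    (hmet : ∀ a b c d : L, ⁅⁅a, b⁆, ⁅c, d⁆⁆ = 0)
    (u v ubar u0 vbar v0 : L)
    (hu : u = ubar + u0) (hv : v = vbar + v0)
    (hu0 : u0 ∈ ⁅(⊤ : LieIdeal K L), (⊤ : LieIdeal K L)⁆)
    (hv0 : v0 ∈ ⁅(⊤ : LieIdeal K L), (⊤ : LieIdeal K L)⁆)
    (s : Finset (ℕ × ℕ)) (a : ℕ × ℕ → K) :
    ∑ p ∈ s, a p • ((adr K L v) ^ p.2) (((adr K L u) ^ p.1) ⁅u, v⁆) =
      ∑ p ∈ s, a p • ((adr K L vbar) ^ p.2)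
        (((adr K L ubar) ^ p.1) (⁅ubar, vbar⁆ + ⁅u0, vbar⁆ - ⁅v0, ubar⁆)) := by
  set D := ⁅(⊤ : LieIdeal K L), (⊤ : LieIdeal K L)⁆
  have lie_mem_D (x y : L) : ⁅x, y⁆ ∈ D :=
    LieSubmodule.lie_mem_lie (LieSubmodule.mem_top x) (LieSubmodule.mem_top y)
  have bracket_eq : ⁅u, v⁆ = ⁅ubar, vbar⁆ + ⁅u0, vbar⁆ - ⁅v0, ubar⁆ := by
    rw [hu, hv, add_lie, lie_add, lie_add, lie_eq_zero_of_mem_lie_top_top hmet hu0 hv0,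
      ← lie_skew ubar v0]
    abel
  have bracket_mem : ⁅ubar, vbar⁆ + ⁅u0, vbar⁆ - ⁅v0, ubar⁆ ∈ D :=
    sub_mem (add_mem (lie_mem_D _ _) (lie_mem_D _ _)) (lie_mem_D _ _)
  refine Finset.sum_congr rfl fun p _ => ?_
  rw [bracket_eq, hu, hv,
    adr_add_pow_apply_of_mem (fun w hw => lie_eq_zero_of_mem_lie_top_top hmet hw hu0) _ bracket_mem,
    adr_add_pow_apply_of_mem (fun w hw => lie_eq_zero_of_mem_lie_top_top hmet hw hv0) _
      (adr_pow_apply_mem D ubar p.1 bracket_mem)]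

/-- In a metabelian Lie algebra, for `u = ū + u₀`, `v = v̄ + v₀` with `u₀, v₀` in the
commutator ideal and any polynomial `c` in two commuting variables (given by its
coefficients `a` on a finite set `s` of exponent pairs),
`[u,v]·c(ad u, ad v) = ([ū,v̄] + [u₀,v̄] − [v₀,ū])·c(ad ū, ad v̄)`. -/
theorem metabelian_bracket_series_reduction
    (K : Type*) (L : Type*) [Field K] [CharZero K] [LieRing L] [LieAlgebra K L]
    (hmet : ∀ a b c d : L, ⁅⁅a, b⁆, ⁅c, d⁆⁆ = 0)
    (u v ubar u0 vbar v0 : L)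
    (hu : u = ubar + u0) (hv : v = vbar + v0)
    (hu0 : u0 ∈ ⁅(⊤ : LieIdeal K L), (⊤ : LieIdeal K L)⁆)
    (hv0 : v0 ∈ ⁅(⊤ : LieIdeal K L), (⊤ : LieIdeal K L)⁆)
    (s : Finset (ℕ × ℕ)) (a : ℕ × ℕ → K) :
    ∑ p ∈ s, a p • ((adr K L v) ^ p.2) (((adr K L u) ^ p.1) ⁅u, v⁆) =
      ∑ p ∈ s, a p • ((adr K L vbar) ^ p.2)
        (((adr K L ubar) ^ p.1) (⁅ubar, vbar⁆ + ⁅u0, vbar⁆ - ⁅v0, ubar⁆)) :=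
  metabelian_bracket_series_reduction_general K L hmet u v ubar u0 vbar v0 hu hv hu0 hv0 s a
end

section
/- In the abelian wreath product W = A_m wr B_m, the subalgebra generated by the elements a_i + b_i (i = 1,…,m) has derived subalgebra equal to {∑_{i=1}^m a_i f_i : ∑_{i=1}^m t_i f_i = 0}. -/
open MvPolynomial

variable (K : Type*) [Field K] (m : ℕ)

/-- The underlying space of the abelian wreath product `A_m wr B_m = C_m ⋊ B_m`. -/
abbrev WreathCarrier := (Fin m → MvPolynomial (Fin m) K) × (Fin m → K)

/-- `∑ⱼ βⱼ tⱼ`. -/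
noncomputable def tvec (β : Fin m → K) : MvPolynomial (Fin m) K :=
  ∑ j : Fin m, MvPolynomial.C (β j) * MvPolynomial.X j

lemma tvec_add (β γ : Fin m → K) :
    tvec K m (β + γ) = tvec K m β + tvec K m γ := by
  simp [tvec, add_mul, Finset.sum_add_distrib]

lemma tvec_zero : tvec K m 0 = 0 := by simp [tvec]

/-- The Lie ring structure of the abelian wreath product `A_m wr B_m`, determined by
`[C_m,C_m] = [B_m,B_m] = 0` and `[aᵢ f, bⱼ] = aᵢ f tⱼ`. -/
noncomputable instance : LieRing (WreathCarrier K m) where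
  bracket x y := (fun i => x.1 i * tvec K m y.2 - y.1 i * tvec K m x.2, 0)
  add_lie x y z := by
    refine Prod.ext ?_ (by simp)
    funext i
    simp [tvec_add, Prod.fst_add, Prod.snd_add, Pi.add_apply]
    ring
  lie_add x y z := by
    refine Prod.ext ?_ (by simp)
    funext i
    simp [tvec_add, Prod.fst_add, Prod.snd_add, Pi.add_apply]
    ring
  lie_self x := by
    refine Prod.ext ?_ rfl
    funext i
    simp
  leibniz_lie x y z := by
    refine Prod.ext ?_ (by simp)
    funext i
    simp [tvec_zero]
    ring

lemma tvec_smul (c : K) (β : Fin m → K) :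
    tvec K m (c • β) = MvPolynomial.C c * tvec K m β := by
  simp [tvec, Finset.mul_sum, mul_assoc]

lemma wr_bracket_def (x y : WreathCarrier K m) :
    ⁅x, y⁆ = (fun i => x.1 i * tvec K m y.2 - y.1 i * tvec K m x.2, (0 : Fin m → K)) :=
  rfl

/-- The Lie algebra structure of `A_m wr B_m` over `K`. -/
noncomputable instance : LieAlgebra K (WreathCarrier K m) where
  lie_smul c x y := by
    refine Prod.ext ?_ (by simp [wr_bracket_def])
    funext i
    simp [wr_bracket_def, tvec_smul, MvPolynomial.smul_eq_C_mul, smul_sub]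
    ring

/-- The generators `yᵢ = aᵢ + bᵢ` of Shmel'kin's embedded free metabelian algebra. -/
noncomputable def yGen (i : Fin m) : WreathCarrier K m :=
  (Pi.single i 1, Pi.single i 1)

/-! ### Auxiliary machinery -/

/-- Substitution `t_k := 0`. -/
noncomputable def phiW (k : Fin m) :
    MvPolynomial (Fin m) K →ₐ[K] MvPolynomial (Fin m) K :=
  MvPolynomial.aeval (fun j => if j = k then 0 else MvPolynomial.X j)

lemma phiW_X (k j : Fin m) :
    phiW K m k (MvPolynomial.X j) = if j = k then 0 else MvPolynomial.X j :=
  MvPolynomial.aeval_X _ j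

lemma phiW_phiW (k l : Fin m) (p : MvPolynomial (Fin m) K) :
    phiW K m k (phiW K m l p) = phiW K m l (phiW K m k p) := by
  have h : (phiW K m k).comp (phiW K m l) = (phiW K m l).comp (phiW K m k) := by
    apply MvPolynomial.algHom_ext
    intro j
    show phiW K m k (phiW K m l (MvPolynomial.X j))
        = phiW K m l (phiW K m k (MvPolynomial.X j))
    by_cases hjl : j = l
    · subst hjl
      by_cases hjk : j = k
      · subst hjk; rfl
      · simp [phiW_X, hjk]
    · by_cases hjk : j = k
      · subst hjk; simp [phiW_X, hjl]
      · simp [phiW_X, hjl, hjk]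
  exact DFunLike.congr_fun h p

lemma phiW_idem (k : Fin m) (p : MvPolynomial (Fin m) K) :
    phiW K m k (phiW K m k p) = phiW K m k p := by
  have h : (phiW K m k).comp (phiW K m k) = phiW K m k := by
    apply MvPolynomial.algHom_ext
    intro j
    show phiW K m k (phiW K m k (MvPolynomial.X j)) = phiW K m k (MvPolynomial.X j)
    by_cases hjk : j = k
    · subst hjk; simp [phiW_X]
    · simp [phiW_X, hjk]
  exact DFunLike.congr_fun h p

lemma X_dvd_sub_phiW (k : Fin m) (p : MvPolynomial (Fin m) K) :
    MvPolynomial.X k ∣ p - phiW K m k p := by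
  induction p using MvPolynomial.induction_on with
  | C a => simp [phiW]
  | add p q hp hq =>
      have h := dvd_add hp hq
      rw [map_add]
      convert h using 1
      ring
  | mul_X p j hp =>
      rw [map_mul, phiW_X]
      by_cases hjk : j = k
      · subst hjk
        rw [if_pos rfl, mul_zero, sub_zero]
        exact dvd_mul_left _ _
      · rw [if_neg hjk]
        have h : p * MvPolynomial.X j - phiW K m k p * MvPolynomial.X j
            = (p - phiW K m k p) * MvPolynomial.X j := by ring
        rw [h]
        exact dvd_mul_of_dvd_left hp _

/-- The span of the Koszul syzygies. -/
noncomputable def koszulSpan :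
    Submodule (MvPolynomial (Fin m) K) (Fin m → MvPolynomial (Fin m) K) :=
  Submodule.span _ {v | ∃ i j : Fin m,
    v = Pi.single i (MvPolynomial.X j) - Pi.single j (MvPolynomial.X i)}

open MvPolynomial in
lemma syzygy_aux : ∀ (n k : ℕ) (f : Fin m → MvPolynomial (Fin m) K),
    m ≤ k + n →
    (∀ i : Fin m, (i : ℕ) < k → f i = 0) →
    (∀ (i j : Fin m), (j : ℕ) < k → phiW K m j (f i) = f i) →
    (∑ i, MvPolynomial.X i * f i) = 0 → f ∈ koszulSpan K m := by
  intro n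
  induction n with
  | zero =>
      intro k f hmk hz _ _
      have hf : f = 0 := funext fun i => hz i (lt_of_lt_of_le i.2 (by omega))
      rw [hf]; exact Submodule.zero_mem _
  | succ n ih =>
      intro k f hmk hz hv hs
      by_cases hkm : m ≤ k
      · have hf : f = 0 := funext fun i => hz i (lt_of_lt_of_le i.2 hkm)
        rw [hf]; exact Submodule.zero_mem _
      · set kF : Fin m := ⟨k, lt_of_not_ge hkm⟩ with hkF
        set a : Fin m → MvPolynomial (Fin m) K := fun i => phiW K m kF (f i) with ha
        choose b hb using fun i => X_dvd_sub_phiW K m kF (f i)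
        have hfi : ∀ i, f i = a i + X kF * b i := by
          intro i
          have h := hb i
          show f i = phiW K m kF (f i) + X kF * b i
          linear_combination h
        have e1 : ∑ i, X i * f i
            = X kF * (a kF + ∑ i, X i * b i)
              + ∑ i ∈ Finset.univ.erase kF, X i * a i := by
          calc ∑ i, X i * f i
              = ∑ i, (X i * a i + X kF * (X i * b i)) := by
                refine Finset.sum_congr rfl fun i _ => ?_
                rw [hfi i]; ring
            _ = ∑ i, X i * a i + X kF * ∑ i, X i * b i := by
                rw [Finset.sum_add_distrib, Finset.mul_sum]
            _ = (X kF * a kF + ∑ i ∈ Finset.univ.erase kF, X i * a i)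
                  + X kF * ∑ i, X i * b i := by
                rw [Finset.add_sum_erase _ (fun i => X i * a i) (Finset.mem_univ kF)]
            _ = _ := by ring
        have hs2 : X kF * (a kF + ∑ i, X i * b i)
            + ∑ i ∈ Finset.univ.erase kF, X i * a i = 0 := by
          rw [← e1, hs]
        have hphis : phiW K m kF (∑ i ∈ Finset.univ.erase kF, X i * a i)
            = ∑ i ∈ Finset.univ.erase kF, X i * a i := by
          rw [map_sum]
          refine Finset.sum_congr rfl fun i hi => ?_
          rw [map_mul, phiW_X, if_neg (Finset.ne_of_mem_erase hi)]
          show MvPolynomial.X i * phiW K m kF (phiW K m kF (f i))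
              = MvPolynomial.X i * phiW K m kF (f i)
          rw [phiW_idem]
        have hs0 : (∑ i ∈ Finset.univ.erase kF, X i * a i) = 0 := by
          have h := congrArg (phiW K m kF) hs2
          rw [map_add, map_mul, phiW_X, if_pos rfl, zero_mul, zero_add, hphis,
            map_zero] at h
          exact h
        have hg : a kF + ∑ i, X i * b i = 0 := by
          have hx : X kF * (a kF + ∑ i, X i * b i) = 0 := by
            rw [hs0, add_zero] at hs2; exact hs2
          rcases mul_eq_zero.mp hx with h | h
          · exact absurd h (MvPolynomial.X_ne_zero _)
          · exact h
        set f' : Fin m → MvPolynomial (Fin m) K :=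
          fun i => if i = kF then 0 else a i with hf'
        have hfk : f kF + ∑ i ∈ Finset.univ.erase kF, X i * b i = 0 := by
          have h2 : X kF * b kF + ∑ i ∈ Finset.univ.erase kF, X i * b i
              = ∑ i, X i * b i :=
            Finset.add_sum_erase Finset.univ (fun i => X i * b i)
              (Finset.mem_univ kF)
          rw [hfi kF]
          linear_combination hg + h2
        have hdecomp : f = f' + ∑ i ∈ Finset.univ.erase kF,
            b i • (Pi.single i (X kF) - Pi.single kF (X i)) := by
          funext l
          rw [Pi.add_apply, Finset.sum_apply]
          by_cases hl : l = kF
          · subst hl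
            simp only [hf', if_pos rfl, zero_add]
            have hterm : ∀ i ∈ Finset.univ.erase kF,
                (b i • (Pi.single i (X kF) - Pi.single kF (X i)
                  : Fin m → MvPolynomial (Fin m) K)) kF = -(X i * b i) := by
              intro i hi
              have hik : i ≠ kF := Finset.ne_of_mem_erase hi
              rw [Pi.smul_apply, Pi.sub_apply, Pi.single_apply, Pi.single_apply,
                if_neg (Ne.symm hik), if_pos rfl, smul_eq_mul]
              ring
            rw [Finset.sum_congr rfl hterm, Finset.sum_neg_distrib]
            linear_combination hfk
          · simp only [hf', if_neg hl]
            rw [Finset.sum_eq_single_of_mem l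
              (Finset.mem_erase.mpr ⟨hl, Finset.mem_univ l⟩) ?side]
            · rw [Pi.smul_apply, Pi.sub_apply, Pi.single_apply, Pi.single_apply,
                if_pos rfl, if_neg hl, smul_eq_mul]
              linear_combination hfi l
            case side =>
              intro i _ hil
              rw [Pi.smul_apply, Pi.sub_apply, Pi.single_apply, Pi.single_apply,
                if_neg (fun h => hil h.symm), if_neg hl, smul_eq_mul]
              ring
        rw [hdecomp]
        refine Submodule.add_mem _ ?_ (Submodule.sum_mem _ fun i _ =>
          Submodule.smul_mem _ _ (Submodule.subset_span ⟨i, kF, rfl⟩))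
        refine ih (k + 1) f' (by omega) ?_ ?_ ?_
        · intro i hi
          simp only [hf']
          by_cases hik : i = kF
          · rw [if_pos hik]
          · rw [if_neg hik]
            have hilt : (i : ℕ) < k := by
              have : (i : ℕ) ≠ k := fun h => hik (Fin.ext h)
              omega
            show phiW K m kF (f i) = 0
            rw [hz i hilt, map_zero]
        · intro i j hj
          simp only [hf']
          by_cases hik : i = kF
          · rw [if_pos hik, map_zero]
          · rw [if_neg hik]
            show phiW K m j (phiW K m kF (f i)) = phiW K m kF (f i)
            by_cases hjk : (j : ℕ) = k
            · have hj' : j = kF := Fin.ext hjk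
              rw [hj', phiW_idem]
            · have hjlt : (j : ℕ) < k := by omega
              rw [phiW_phiW, hv i j hjlt]
        · have h3 : ∑ i, X i * f' i = ∑ i ∈ Finset.univ.erase kF, X i * a i := by
            rw [← Finset.add_sum_erase _ (fun i => X i * f' i) (Finset.mem_univ kF)]
            simp only [hf', if_pos rfl, mul_zero, zero_add]
            refine Finset.sum_congr rfl fun i hi => ?_
            rw [if_neg (Finset.ne_of_mem_erase hi)]
          rw [h3, hs0]

lemma tvec_single (i : Fin m) :
    tvec K m (Pi.single i 1) = MvPolynomial.X i := by
  rw [tvec, Finset.sum_eq_single_of_mem i (Finset.mem_univ i)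
    (fun j _ hji => by rw [Pi.single_apply, if_neg hji, map_zero, zero_mul])]
  rw [Pi.single_apply, if_pos rfl, map_one, one_mul]

/-- The linear functional whose kernel contains `F`. -/
noncomputable def Lmap : WreathCarrier K m →ₗ[K] MvPolynomial (Fin m) K where
  toFun z := (∑ i, MvPolynomial.X i * z.1 i) - tvec K m z.2
  map_add' x y := by
    simp only [Prod.fst_add, Prod.snd_add, Pi.add_apply, tvec_add, mul_add,
      Finset.sum_add_distrib]
    ring
  map_smul' c x := by
    simp only [Prod.smul_fst, Prod.smul_snd, Pi.smul_apply, tvec_smul,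
      MvPolynomial.smul_eq_C_mul, RingHom.id_apply, Finset.mul_sum, mul_sub]
    congr 1
    refine Finset.sum_congr rfl fun i _ => ?_
    ring

/-- The Lie subalgebra `ker Lmap`, which contains `F`. -/
noncomputable def Ssub : LieSubalgebra K (WreathCarrier K m) :=
  { LinearMap.ker (Lmap K m) with
    lie_mem' := by
      intro x y hx hy
      have hx0 : (∑ i, MvPolynomial.X i * x.1 i) - tvec K m x.2 = 0 := hx
      have hy0 : (∑ i, MvPolynomial.X i * y.1 i) - tvec K m y.2 = 0 := hy
      have hx' : ∑ i, MvPolynomial.X i * x.1 i = tvec K m x.2 := by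
        linear_combination hx0
      have hy' : ∑ i, MvPolynomial.X i * y.1 i = tvec K m y.2 := by
        linear_combination hy0
      show ⁅x, y⁆ ∈ LinearMap.ker (Lmap K m)
      rw [LinearMap.mem_ker]
      show (∑ i, MvPolynomial.X i * ⁅x, y⁆.1 i) - tvec K m ⁅x, y⁆.2 = 0
      rw [wr_bracket_def]
      simp only [tvec_zero, sub_zero]
      have hsum : ∑ i, MvPolynomial.X i *
          (x.1 i * tvec K m y.2 - y.1 i * tvec K m x.2)
          = (∑ i, MvPolynomial.X i * x.1 i) * tvec K m y.2
            - (∑ i, MvPolynomial.X i * y.1 i) * tvec K m x.2 := by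
        rw [Finset.sum_mul, Finset.sum_mul, ← Finset.sum_sub_distrib]
        refine Finset.sum_congr rfl fun i _ => ?_
        ring
      rw [hsum, hx', hy']
      ring }

lemma sum_X_mul_single (i : Fin m) :
    ∑ l, (MvPolynomial.X l : MvPolynomial (Fin m) K)
        * (Pi.single i 1 : Fin m → MvPolynomial (Fin m) K) l
      = MvPolynomial.X i := by
  rw [Finset.sum_eq_single_of_mem i (Finset.mem_univ i)
    (fun j _ hji => by rw [Pi.single_apply, if_neg hji, mul_zero])]
  rw [Pi.single_apply, if_pos rfl, mul_one]

lemma yGen_mem_Ssub (i : Fin m) : yGen K m i ∈ Ssub K m := by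
  have h : Lmap K m (yGen K m i) = 0 := by
    have h1 : Lmap K m (yGen K m i)
        = (∑ l, (MvPolynomial.X l : MvPolynomial (Fin m) K)
            * (Pi.single i 1 : Fin m → MvPolynomial (Fin m) K) l)
          - tvec K m (Pi.single i 1) := rfl
    rw [h1, sum_X_mul_single, tvec_single, sub_self]
  exact h

noncomputable def Fsub : LieSubalgebra K (WreathCarrier K m) :=
  LieSubalgebra.lieSpan K (WreathCarrier K m) (Set.range (yGen K m))

noncomputable def Msub : Submodule K (WreathCarrier K m) :=
  Submodule.span K
    (Set.image2 (fun x y => ⁅x, y⁆) (Fsub K m : Set (WreathCarrier K m))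
      (Fsub K m : Set (WreathCarrier K m)))

lemma Fsub_le_Ssub : Fsub K m ≤ Ssub K m :=
  (LieSubalgebra.lieSpan_le).mpr (by
    rintro _ ⟨i, rfl⟩
    exact yGen_mem_Ssub K m i)

lemma bracket_yGen (i j : Fin m) :
    ⁅yGen K m i, yGen K m j⁆ =
      ((Pi.single i (MvPolynomial.X j) - Pi.single j (MvPolynomial.X i),
        0) : WreathCarrier K m) := by
  rw [wr_bracket_def]
  refine Prod.ext ?_ rfl
  funext l
  simp only [yGen, tvec_single, Pi.sub_apply, Pi.single_apply]
  split_ifs <;> ring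

/-- right bracket with `yGen k` as a linear map. -/
noncomputable def Tmap (k : Fin m) : WreathCarrier K m →ₗ[K] WreathCarrier K m where
  toFun z := ⁅z, yGen K m k⁆
  map_add' x y := add_lie x y _
  map_smul' c x := smul_lie c x _

lemma Tmap_mem_Msub {z : WreathCarrier K m} (k : Fin m) (hz : z ∈ Msub K m) :
    Tmap K m k z ∈ Msub K m := by
  have hmap : (Msub K m).map (Tmap K m k) ≤ Msub K m := by
    rw [Msub, Submodule.map_span, Submodule.span_le]
    rintro _ ⟨_, ⟨x, hx, y, hy, rfl⟩, rfl⟩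
    refine Submodule.subset_span ?_
    exact Set.mem_image2_of_mem ((Fsub K m).lie_mem hx hy)
      (LieSubalgebra.subset_lieSpan (Set.mem_range_self k))
  exact hmap (Submodule.mem_map_of_mem hz)

lemma Msub_mul_X (k : Fin m) (d : Fin m → MvPolynomial (Fin m) K)
    (h : ((d, 0) : WreathCarrier K m) ∈ Msub K m) :
    (((fun i => d i * MvPolynomial.X k), 0) : WreathCarrier K m) ∈ Msub K m := by
  have h2 := Tmap_mem_Msub K m k h
  have h3 : Tmap K m k ((d, 0) : WreathCarrier K m)
      = (((fun i => d i * MvPolynomial.X k), 0) : WreathCarrier K m) := by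
    show ⁅((d, 0) : WreathCarrier K m), yGen K m k⁆ = _
    rw [wr_bracket_def]
    refine Prod.ext ?_ rfl
    funext i
    simp only [yGen, tvec_single, tvec_zero, mul_zero, sub_zero]
  rwa [h3] at h2

lemma Msub_mul (r : MvPolynomial (Fin m) K) (d : Fin m → MvPolynomial (Fin m) K)
    (h : ((d, 0) : WreathCarrier K m) ∈ Msub K m) :
    (((fun i => r * d i), 0) : WreathCarrier K m) ∈ Msub K m := by
  induction r using MvPolynomial.induction_on with
  | C c =>
      have h2 := (Msub K m).smul_mem c h
      have h3 : (c • ((d, 0) : WreathCarrier K m))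
          = (((fun i => MvPolynomial.C c * d i), 0) : WreathCarrier K m) := by
        refine Prod.ext ?_ (by simp)
        funext i
        show c • d i = MvPolynomial.C c * d i
        rw [MvPolynomial.smul_eq_C_mul]
      rwa [h3] at h2
  | add p q hp hq =>
      have h2 := (Msub K m).add_mem hp hq
      have h3 : (((fun i => p * d i), 0) : WreathCarrier K m)
          + (((fun i => q * d i), 0) : WreathCarrier K m)
          = (((fun i => (p + q) * d i), 0) : WreathCarrier K m) := by
        refine Prod.ext ?_ (by simp)
        funext i
        show p * d i + q * d i = (p + q) * d i
        ring
      rwa [h3] at h2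
  | mul_X p k hp =>
      have h2 := Msub_mul_X K m k (fun i => p * d i) hp
      have h3 : (((fun i => p * d i * MvPolynomial.X k), 0) : WreathCarrier K m)
          = (((fun i => p * MvPolynomial.X k * d i), 0) : WreathCarrier K m) := by
        refine Prod.ext ?_ rfl
        funext i
        show p * d i * MvPolynomial.X k = p * MvPolynomial.X k * d i
        ring
      rwa [h3] at h2

lemma koszul_mem_Msub (f : Fin m → MvPolynomial (Fin m) K)
    (h : f ∈ koszulSpan K m) : ((f, 0) : WreathCarrier K m) ∈ Msub K m := by
  refine Submodule.span_induction (p := fun v _ => ((v, 0) : WreathCarrier K m) ∈ Msub K m)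
    ?_ ?_ ?_ ?_ h
  · rintro v ⟨i, j, rfl⟩
    rw [← bracket_yGen]
    exact Submodule.subset_span (Set.mem_image2_of_mem
      (LieSubalgebra.subset_lieSpan (Set.mem_range_self i))
      (LieSubalgebra.subset_lieSpan (Set.mem_range_self j)))
  · exact Submodule.zero_mem _
  · intro u v _ _ hu hv
    have h3 : ((u, 0) : WreathCarrier K m) + ((v, 0) : WreathCarrier K m)
        = ((u + v, 0) : WreathCarrier K m) := by
      refine Prod.ext rfl (by simp)
    rw [← h3]
    exact (Msub K m).add_mem hu hv
  · intro r v _ hv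
    have h2 := Msub_mul K m r v hv
    have h3 : (((fun i => r * v i), 0) : WreathCarrier K m)
        = ((r • v, 0) : WreathCarrier K m) := by
      refine Prod.ext ?_ rfl
      funext i
      show r * v i = r • v i
      rw [smul_eq_mul]
    rwa [h3] at h2

/-- Shmel'kin's criterion: an element `∑ᵢ aᵢ fᵢ` of `C_m` lies in the derived
subalgebra of the subalgebra `F` of `A_m wr B_m` generated by the `yᵢ = aᵢ + bᵢ`
if and only if `∑ᵢ tᵢ fᵢ = 0`. Here the derived subalgebra of `F` is the span of
all brackets of pairs of elements of `F`. -/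
theorem shmelkin_criterion (f : Fin m → MvPolynomial (Fin m) K) :
    ((f, 0) : WreathCarrier K m) ∈
        Submodule.span K
          (Set.image2 (fun x y => ⁅x, y⁆)
            ((LieSubalgebra.lieSpan K (WreathCarrier K m)
                (Set.range (yGen K m)) : LieSubalgebra K (WreathCarrier K m)) : Set (WreathCarrier K m))
            ((LieSubalgebra.lieSpan K (WreathCarrier K m)
                (Set.range (yGen K m)) : LieSubalgebra K (WreathCarrier K m)) : Set (WreathCarrier K m)))
      ↔ ∑ i : Fin m, MvPolynomial.X i * f i = 0 := by
  have hMsub : Submodule.span K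
      (Set.image2 (fun x y => ⁅x, y⁆)
        ((LieSubalgebra.lieSpan K (WreathCarrier K m)
            (Set.range (yGen K m)) : LieSubalgebra K (WreathCarrier K m)) : Set (WreathCarrier K m))
        ((LieSubalgebra.lieSpan K (WreathCarrier K m)
            (Set.range (yGen K m)) : LieSubalgebra K (WreathCarrier K m)) : Set (WreathCarrier K m)))
      = Msub K m := rfl
  rw [hMsub]
  constructor
  · intro h
    have hker : Msub K m ≤ LinearMap.ker (Lmap K m) := by
      rw [Msub, Submodule.span_le]
      rintro _ ⟨x, hx, y, hy, rfl⟩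
      have hxS : x ∈ Ssub K m := Fsub_le_Ssub K m hx
      have hyS : y ∈ Ssub K m := Fsub_le_Ssub K m hy
      exact (Ssub K m).lie_mem hxS hyS
    have h2 : Lmap K m ((f, 0) : WreathCarrier K m) = 0 :=
      LinearMap.mem_ker.mp (hker h)
    have h3 : (∑ i, MvPolynomial.X i * f i) - tvec K m 0 = 0 := h2
    rwa [tvec_zero, sub_zero] at h3
  · intro h
    exact koszul_mem_Msub K m f
      (syzygy_aux K m m 0 f (by omega) (fun i hi => absurd hi (by omega))
        (fun i j hj => absurd hj (by omega)) h)
end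

section
/- Let Ŝ = {(f_{ij}) ∈ M_m(K[[t₁,…,t_m]]) : ∑_{i=1}^m t_i f_{ij} = 0 for all j, and each f_{ij} has zero constant term}. Then every element of I_m + Ŝ is invertible in M_m(K[[t₁,…,t_m]]) and its inverse again lies in I_m + Ŝ; hence I_m + Ŝ is a group under multiplication. -/
open MvPowerSeries Matrix

/-!
Taking constant coefficients is a local ring homomorphism `K[[t]] → K`, and so is its entrywise
extension to matrices (a matrix is a unit iff its determinant is). Since `1 + A` reduces to the
identity it is a unit, and its inverse `N` reduces to the identity too, i.e. `N - 1` has entries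
with zero constant term. The column relations say that the row vector `t = (t₁, …, t_m)` satisfies
`t (1 + A) = t`; multiplying on the right by `N` gives `t N = t`.
-/

instance MvPowerSeries.isLocalHom_constantCoeff {σ R : Type*} [Ring R] :
    IsLocalHom (constantCoeff : MvPowerSeries σ R →+* R) :=
  ⟨fun _ ↦ isUnit_iff_constantCoeff.mpr⟩

instance RingHom.isLocalHom_mapMatrix {n R S : Type*} [Fintype n] [DecidableEq n]
    [CommRing R] [CommRing S] (f : R →+* S) [IsLocalHom f] :
    IsLocalHom (f.mapMatrix : Matrix n n R →+* Matrix n n S) := by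
  refine ⟨fun M hM ↦ (isUnit_iff_isUnit_det M).mpr (isUnit_of_map_unit f _ ?_)⟩
  rw [f.map_det]
  exact (isUnit_iff_isUnit_det _).mp hM

namespace Matrix

variable {n α : Type*} [Fintype n] [DecidableEq n]

theorem vecMul_eq_self_of_mul_eq_one [Semiring α] {v : n → α} {M N : Matrix n n α}
    (hv : v ᵥ* M = v) (hMN : M * N = 1) : v ᵥ* N = v :=
  calc v ᵥ* N = v ᵥ* M ᵥ* N := by rw [hv]
    _ = v := by rw [vecMul_vecMul, hMN, vecMul_one]

theorem vecMul_one_add_eq_self_iff [Ring α] {v : n → α} {A : Matrix n n α} :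
    v ᵥ* (1 + A) = v ↔ v ᵥ* A = 0 := by
  rw [vecMul_add, vecMul_one, add_eq_left]

theorem mapMatrix_one_add_eq_one_iff {β : Type*} [Ring α] [Ring β] (f : α →+* β)
    {A : Matrix n n α} : f.mapMatrix (1 + A) = 1 ↔ f.mapMatrix A = 0 := by
  rw [map_add, map_one, add_eq_left]

end Matrix

theorem one_add_S_hat_is_group_general
    (K : Type*) [Field K] (m : ℕ)
    (A : Matrix (Fin m) (Fin m) (MvPowerSeries (Fin m) K))
    (hA : ∀ j, ∑ i : Fin m, (MvPowerSeries.X i : MvPowerSeries (Fin m) K) * A i j = 0)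
    (hA0 : ∀ i j, MvPowerSeries.constantCoeff (A i j) = 0) :
    IsUnit (1 + A) ∧
      ∃ B : Matrix (Fin m) (Fin m) (MvPowerSeries (Fin m) K),
        (∀ j, ∑ i : Fin m, (MvPowerSeries.X i : MvPowerSeries (Fin m) K) * B i j = 0) ∧
        (∀ i j, MvPowerSeries.constantCoeff (B i j) = 0) ∧
        (1 + A) * (1 + B) = 1 ∧ (1 + B) * (1 + A) = 1 := by
  let Φ := (constantCoeff : MvPowerSeries (Fin m) K →+* K).mapMatrix (m := Fin m)
  have : IsLocalHom Φ := RingHom.isLocalHom_mapMatrix _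
  let t : Fin m → MvPowerSeries (Fin m) K := fun i ↦ X i
  have hΦA : Φ (1 + A) = 1 := (mapMatrix_one_add_eq_one_iff _).mpr (ext hA0)
  have htA : t ᵥ* (1 + A) = t := vecMul_one_add_eq_self_iff.mpr (funext hA)
  obtain ⟨u, hu⟩ : IsUnit (1 + A) := isUnit_of_map_unit Φ _ (hΦA ▸ isUnit_one)
  let N : Matrix (Fin m) (Fin m) (MvPowerSeries (Fin m) K) := ↑u⁻¹
  have hN : 1 + (N - 1) = N := add_sub_cancel _ _
  have hright : (1 + A) * N = 1 := hu ▸ u.mul_inv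
  have hleft : N * (1 + A) = 1 := hu ▸ u.inv_mul
  have hΦN : Φ (1 + (N - 1)) = 1 := by simpa [hN, hΦA] using congrArg Φ hleft
  have htN : t ᵥ* (1 + (N - 1)) = t := by rw [hN]; exact vecMul_eq_self_of_mul_eq_one htA hright
  refine ⟨⟨u, hu⟩, N - 1, congrFun (vecMul_one_add_eq_self_iff.mp htN),
    congrFun₂ ((mapMatrix_one_add_eq_one_iff _).mp hΦN), ?_, ?_⟩ <;> rwa [hN]

/-- Let `Ŝ` be the set of matrices over `K[[t₁,…,t_m]]` whose entries have zero
constant term and whose columns are orthogonal to `(t₁,…,t_m)`. Every element of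
`I_m + Ŝ` is invertible in `M_m(K[[t₁,…,t_m]])` with inverse again in `I_m + Ŝ`;
hence `I_m + Ŝ` is a group under multiplication. -/
theorem one_add_S_hat_is_group
    (K : Type*) [Field K] [CharZero K] (m : ℕ)
    (A : Matrix (Fin m) (Fin m) (MvPowerSeries (Fin m) K))
    (hA : ∀ j, ∑ i : Fin m, (MvPowerSeries.X i : MvPowerSeries (Fin m) K) * A i j = 0)
    (hA0 : ∀ i j, MvPowerSeries.constantCoeff (A i j) = 0) :
    IsUnit (1 + A) ∧
      ∃ B : Matrix (Fin m) (Fin m) (MvPowerSeries (Fin m) K),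
        (∀ j, ∑ i : Fin m, (MvPowerSeries.X i : MvPowerSeries (Fin m) K) * B i j = 0) ∧
        (∀ i j, MvPowerSeries.constantCoeff (B i j) = 0) ∧
        (1 + A) * (1 + B) = 1 ∧ (1 + B) * (1 + A) = 1 :=
  one_add_S_hat_is_group_general K m A hA hA0
end
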